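/- arXiv:0710.0082 — 3 statements merged into one kernel-verified Lean document; each statement's English description precedes it below -/
import Mathlib

section
/- Let C be a monoidal category and A a monoid object in C whose multiplication μ : A ⊗ A → A is an isomorphism. Then for any two left A-modules M and N and any morphism f : M → N between their underlying objects in C, f automatically commutes with the actions, i.e. (A ◁ f) ≫ ξ_N = ξ_M ≫ f; consequently the forgetful functor from the category of left A-modules (Mod_ A) to C is fully faithful, so left A-modules form a full subcategory of C. -/
/-!
If `μ` is mono, the two maps `λ⁻¹ ≫ η ▷ A` and `ρ⁻¹ ≫ A ◁ η` from `A` to `A ⊗ A` agree, both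
being sections of `μ`. Whiskering this identity by a module `M` shows that the section
`λ⁻¹ ≫ η ▷ M` of the action `γ : A ⊗ M ⟶ M` is also a retraction, so `γ` is invertible. For any
`f : M ⟶ N`, precomposing the square with `γ⁻¹ = λ⁻¹ ≫ η ▷ M` reduces it to the unit axiom of `N`.
-/

namespace CategoryTheory

open Category MonoidalCategory CategoryTheory.MonObj

variable {C : Type*} [Category C] [MonoidalCategory C] {A : C} [MonObj A]

theorem MonObj.leftUnitor_inv_one_whiskerRight_of_mono_mul [Mono μ[A]] :
    (λ_ A).inv ≫ η ▷ A = (ρ_ A).inv ≫ A ◁ η := by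
  simp [← cancel_mono μ[A]]

theorem MonObj.leftUnitor_inv_one_whiskerRight_tensor_of_mono_mul [Mono μ[A]] (X : C) :
    (λ_ (A ⊗ X)).inv ≫ η ▷ (A ⊗ X) = A ◁ ((λ_ X).inv ≫ η ▷ X) :=
  calc (λ_ (A ⊗ X)).inv ≫ η ▷ (A ⊗ X)
      = ((λ_ A).inv ≫ η ▷ A) ▷ X ≫ (α_ A A X).hom := by simp
    _ = ((ρ_ A).inv ≫ A ◁ η) ▷ X ≫ (α_ A A X).hom := by
      rw [leftUnitor_inv_one_whiskerRight_of_mono_mul]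
    _ = A ◁ ((λ_ X).inv ≫ η ▷ X) := by simp

namespace ModObj

variable {M N : C} [ModObj A M] [ModObj A N]

theorem smul_leftUnitor_inv_one_whiskerRight_of_mono_mul [Mono μ[A]] :
    γ[A, M] ≫ (λ_ M).inv ≫ η ▷ M = 𝟙 (A ⊗ M) :=
  calc γ[A, M] ≫ (λ_ M).inv ≫ η ▷ M
      = (λ_ (A ⊗ M)).inv ≫ η ▷ (A ⊗ M) ≫ A ◁ γ[A, M] := by
        rw [leftUnitor_inv_naturality_assoc, whisker_exchange]; rfl
    _ = A ◁ ((λ_ M).inv ≫ η ▷ M ≫ γ[A, M]) := by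
      rw [← assoc, leftUnitor_inv_one_whiskerRight_tensor_of_mono_mul, ← whiskerLeft_comp, assoc]
    _ = 𝟙 (A ⊗ M) := by simp

theorem isIso_smul_of_mono_mul [Mono μ[A]] : IsIso γ[A, M] :=
  ⟨(λ_ M).inv ≫ η ▷ M, smul_leftUnitor_inv_one_whiskerRight_of_mono_mul, by simp⟩

theorem inv_smul [IsIso γ[A, M]] : inv γ[A, M] = (λ_ M).inv ≫ η ▷ M :=
  IsIso.inv_eq_of_inv_hom_id (by simp)

theorem whiskerLeft_smul_of_isIso_smul [IsIso γ[A, M]] (f : M ⟶ N) :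
    A ◁ f ≫ γ[A, N] = γ[A, M] ≫ f := by
  rw [← cancel_epi (inv γ[A, M]), IsIso.inv_hom_id_assoc, inv_smul, assoc,
    ← whisker_exchange_assoc]
  simp

end ModObj
end CategoryTheory

open CategoryTheory Category MonoidalCategory

/-- If the multiplication of a monoid object `A` in a monoidal category is an isomorphism,
then any morphism between the underlying objects of two left `A`-modules automatically
commutes with the actions, and consequently the forgetful functor `Mod_ A ⥤ C` is full and
faithful, i.e. left `A`-modules form a full subcategory of `C`. -/
theorem mod_forget_fullyFaithful {C : Type*} [Category C] [MonoidalCategory C]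
    (A : Mon C) [IsIso (MonObj.mul (X := A.X))] :
    (∀ (M N : Mod C A.X) (f : M.X ⟶ N.X),
      (A.X ◁ f) ≫ ModObj.smul (M := A.X) (X := N.X) = ModObj.smul (M := A.X) (X := M.X) ≫ f) ∧
      (Mod.forget (D := C) A.X).Full ∧ (Mod.forget (D := C) A.X).Faithful := by
  have commutes (M N : Mod C A.X) (f : M.X ⟶ N.X) :
      (A.X ◁ f) ≫ ModObj.smul (M := A.X) (X := N.X) = ModObj.smul (M := A.X) (X := M.X) ≫ f :=
    have := ModObj.isIso_smul_of_mono_mul (A := A.X) (M := M.X)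
    ModObj.whiskerLeft_smul_of_isIso_smul f
  exact ⟨commutes, ⟨fun f => ⟨Mod.Hom.mk' f (commutes _ _ f).symm, rfl⟩⟩,
    ⟨fun h => Mod.hom_ext _ _ h⟩⟩
end

section
/- Let C be a monoidal category and A a monoid object in C whose multiplication μ : A ⊗ A → A is an isomorphism. Let (M, ξ_M) be a left A-module and (N, ξ_N) a right A-module. Then the two morphisms (N ⊗ A) ⊗ M → N ⊗ M given by ξ_N ▷ M and by α_{N,A,M} ≫ (N ◁ ξ_M) coincide. -/
/-!
Let `s := λ_M⁻¹ ≫ (η ▷ M)`, a section of the action `ξ_M` by its unit axiom. When `μ` is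
invertible, the unit axiom `(η ▷ A) ≫ μ = λ_A` gives `η ▷ A = λ_A ≫ μ⁻¹`, so the idempotent
`ξ_M ≫ s` equals `(μ⁻¹ ▷ M) ≫ α ≫ (A ◁ ξ_M)`, an epimorphism; hence it is the identity and `s`
inverts `ξ_M`. On the other hand the unit axiom of `ξ_N` says that `N ◁ s` is a section of
`α⁻¹ ≫ (ξ_N ▷ M)`. Composing, `ξ_N ▷ M = α ≫ (N ◁ ξ_M) ≫ (N ◁ s) ≫ α⁻¹ ≫ (ξ_N ▷ M) = α ≫ (N ◁ ξ_M)`.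
-/

open CategoryTheory Category MonoidalCategory
open scoped MonObj

theorem CategoryTheory.eq_id_of_comp_self_eq_self_of_epi {C : Type*} [Category C] {X : C}
    (p : X ⟶ X) [Epi p] (hp : p ≫ p = p) : p = 𝟙 X :=
  (cancel_epi p).1 (by rw [hp, comp_id])

section

variable {C : Type*} [Category C] [MonoidalCategory C]

def unitInsertion {A : C} (u : 𝟙_ C ⟶ A) (M : C) : M ⟶ A ⊗ M :=
  (λ_ M).inv ≫ (u ▷ M)

theorem whiskerLeft_unitInsertion_comp_associator_inv_comp_whiskerRight {N A : C}
    {u : 𝟙_ C ⟶ A} {ξ : N ⊗ A ⟶ N} (hξ : (N ◁ u) ≫ ξ = (ρ_ N).hom) (M : C) :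
    (N ◁ unitInsertion u M) ≫ (α_ N A M).inv ≫ (ξ ▷ M) = 𝟙 (N ⊗ M) := by
  rw [unitInsertion, whiskerLeft_comp, assoc, associator_inv_naturality_middle_assoc,
    ← comp_whiskerRight, hξ, triangle_assoc_comp_right, ← whiskerLeft_comp, Iso.inv_hom_id,
    whiskerLeft_id]

theorem MonObj.one_whiskerRight_eq_of_isIso_mul {A : C} [MonObj A] [IsIso μ[A]] :
    η[A] ▷ A = (λ_ A).hom ≫ inv μ[A] := by
  rw [← MonObj.one_mul A, assoc, IsIso.hom_inv_id, comp_id]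

namespace ModObj

variable {A : C} [MonObj A] {M : C} [ModObj A M]

theorem unitInsertion_comp_smul : unitInsertion η[A] M ≫ γ[A, M] = 𝟙 M := by
  simp [unitInsertion]

theorem smul_comp_unitInsertion :
    γ[A, M] ≫ unitInsertion η[A] M =
      (((λ_ A).inv ≫ η ▷ A) ▷ M) ≫ (α_ A A M).hom ≫ (A ◁ γ[A, M]) := by
  rw [unitInsertion, leftUnitor_inv_naturality_assoc, whisker_exchange]
  simp

theorem smul_comp_unitInsertion_of_isIso_mul [IsIso μ[A]] :
    γ[A, M] ≫ unitInsertion η[A] M = 𝟙 (A ⊗ M) := by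
  have hfac : γ[A, M] ≫ unitInsertion η[A] M =
      (inv μ[A] ▷ M) ≫ (α_ A A M).hom ≫ (A ◁ γ[A, M]) := by
    rw [smul_comp_unitInsertion, MonObj.one_whiskerRight_eq_of_isIso_mul, Iso.inv_hom_id_assoc]
  have : Epi (A ◁ γ[A, M]) :=
    epi_of_epi_fac (f := A ◁ unitInsertion η[A] M) (h := 𝟙 _) <| by
      rw [← whiskerLeft_comp, unitInsertion_comp_smul, whiskerLeft_id]
  have : Epi (γ[A, M] ≫ unitInsertion η[A] M) := by rw [hfac]; infer_instance
  exact eq_id_of_comp_self_eq_self_of_epi _ <| by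
    rw [assoc, ← assoc (unitInsertion _ _), unitInsertion_comp_smul, id_comp]

end ModObj

end

theorem right_act_tensor_left_act_eq_general {C : Type*} [Category C] [MonoidalCategory C]
    (A : Mon C) [IsIso (MonObj.mul (X := A.X))] (M : Mod C A.X)
    (N : C) (ξN : N ⊗ A.X ⟶ N)
    (hunit : (N ◁ MonObj.one (X := A.X)) ≫ ξN = (ρ_ N).hom) :
    ξN ▷ M.X = (α_ N A.X M.X).hom ≫ (N ◁ ModObj.smul (M := A.X) (X := M.X)) := by
  calc ξN ▷ M.X
      = ((α_ N A.X M.X).hom ≫ (N ◁ γ[A.X, M.X])) ≫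
          (N ◁ unitInsertion η[A.X] M.X) ≫ (α_ N A.X M.X).inv ≫ (ξN ▷ M.X) := by
        rw [assoc, ← whiskerLeft_comp_assoc, ModObj.smul_comp_unitInsertion_of_isIso_mul,
          whiskerLeft_id, id_comp, Iso.hom_inv_id_assoc]
    _ = (α_ N A.X M.X).hom ≫ (N ◁ γ[A.X, M.X]) := by
        rw [whiskerLeft_unitInsertion_comp_associator_inv_comp_whiskerRight hunit, comp_id]

/-- If the multiplication of a monoid object `A` in a monoidal category is an isomorphism,
`M` is a left `A`-module, and `(N, ξN)` is a right `A`-module, then the two morphisms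
`(N ⊗ A) ⊗ M ⟶ N ⊗ M`, namely `ξN ▷ M` and `α ≫ (N ◁ ξM)`, coincide. -/
theorem right_act_tensor_left_act_eq {C : Type*} [Category C] [MonoidalCategory C]
    (A : Mon C) [IsIso (MonObj.mul (X := A.X))] (M : Mod C A.X)
    (N : C) (ξN : N ⊗ A.X ⟶ N)
    (hunit : (N ◁ MonObj.one (X := A.X)) ≫ ξN = (ρ_ N).hom)
    (hassoc : (α_ N A.X A.X).hom ≫ (N ◁ MonObj.mul (X := A.X)) ≫ ξN = (ξN ▷ A.X) ≫ ξN) :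
    ξN ▷ M.X = (α_ N A.X M.X).hom ≫ (N ◁ ModObj.smul (M := A.X) (X := M.X)) :=
  right_act_tensor_left_act_eq_general A M N ξN hunit
end

section
/- Let C be a symmetric monoidal closed category with all small limits and colimits and terminal object t, and let a, b, c be pointed objects of C. Then hom_*(a, hom_*(b, c)) is a pullback of the cospan [a ⊗ b, c] → [(a ⊗ t) ⨿ (t ⊗ b), c] ← t, where the first leg is induced by the canonical morphism (a ⊗ t) ⨿ (t ⊗ b) → a ⊗ b with components id_a ⊗ pt_b and pt_a ⊗ id_b, and the second leg is adjoint to the morphism ((a ⊗ t) ⨿ (t ⊗ b)) ⊗ t → c that factors through t followed by pt_c. -/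
/-!
Transposing twice identifies morphisms `X ⟶ [a, [b, c]]` with morphisms `b ⊗ (a ⊗ X) ⟶ c`, and
the braiding identifies these with morphisms `(a ⊗ b) ⊗ X ⟶ c`, that is, with morphisms
`X ⟶ [a ⊗ b, c]`. A morphism factors through `hom_*(a, hom_*(b, c))` exactly when its transpose
is constant at the basepoint of `c` on `t ⊗ (a ⊗ X)` and on `b ⊗ (t ⊗ X)`. Since `- ⊗ X`
preserves coproducts, these two conditions together say that the transpose is constant on
`((a ⊗ t) ⨿ (t ⊗ b)) ⊗ X`, which is the condition for factoring through the pullback of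
`[a ⊗ b, c] ⟶ [(a ⊗ t) ⨿ (t ⊗ b), c] ⟵ t`.
-/


set_option linter.unusedSectionVars false
open CategoryTheory CategoryTheory.Limits CategoryTheory.MonoidalCategory
  CategoryTheory.MonoidalClosed

universe v u

namespace BasedObjects

variable {C : Type u} [Category.{v} C] [MonoidalCategory C] [SymmetricCategory C]
  [MonoidalClosed C] [HasLimits C] [HasColimits C]

/-- The object `(a ⊗ t) ⨿ (t ⊗ b)` appearing in the definition of the smash product of
pointed objects `a` and `b`. -/
noncomputable def wedgeObj (a b : Under (⊤_ C)) : C :=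
  (a.right ⊗ (⊤_ C : C)) ⨿ ((⊤_ C : C) ⊗ b.right)

/-- The canonical morphism `(a ⊗ t) ⨿ (t ⊗ b) ⟶ a ⊗ b` with components `id_a ⊗ pt_b` and
`pt_a ⊗ id_b`. -/
noncomputable def wedgeMap (a b : Under (⊤_ C)) : wedgeObj a b ⟶ a.right ⊗ b.right :=
  coprod.desc (a.right ◁ b.hom) (a.hom ▷ b.right)

/-- The smash product of pointed objects: the pushout of
`t ⟵ (a ⊗ t) ⨿ (t ⊗ b) ⟶ a ⊗ b`, pointed by the coprojection from `t`. -/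
noncomputable def smash (a b : Under (⊤_ C)) : Under (⊤_ C) :=
  Under.mk (pushout.inr (wedgeMap a b) (terminal.from (wedgeObj a b)))

/-- Functoriality of the smash product of pointed objects. -/
noncomputable def smashMap {a a' b b' : Under (⊤_ C)} (f : a ⟶ a') (g : b ⟶ b') :
    smash a b ⟶ smash a' b' :=
  Under.homMk
    (pushout.map (wedgeMap a b) (terminal.from (wedgeObj a b))
      (wedgeMap a' b') (terminal.from (wedgeObj a' b'))
      (f.right ⊗ₘ g.right) (𝟙 (⊤_ C))
      (coprod.map (f.right ▷ (⊤_ C : C)) ((⊤_ C : C) ◁ g.right))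
      (by
        dsimp only [wedgeMap, wedgeObj]
        apply coprod.hom_ext
        · rw [coprod.inl_desc_assoc, coprod.map_desc, coprod.inl_desc,
            MonoidalCategory.tensorHom_def, whisker_exchange_assoc, ← MonoidalCategory.whiskerLeft_comp,
            Under.w g]
        · rw [coprod.inr_desc_assoc, coprod.map_desc, coprod.inr_desc,
            MonoidalCategory.tensorHom_def', ← whisker_exchange_assoc, ← comp_whiskerRight,
            Under.w f])
      (Subsingleton.elim _ _))
    (by dsimp [smash]; erw [pushout.inr_desc, Category.id_comp])

/-- Any two morphisms into an internal hom object of the form `[A, t]`, with `t` terminal,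
agree. -/
theorem hom_to_ihom_terminal_ext {A X : C} (f g : X ⟶ (ihom A).obj (⊤_ C : C)) : f = g :=
  uncurry_injective (Subsingleton.elim _ _)

/-- The canonical isomorphism `t ≅ [A, t]`, witnessing that the internal hom out of `A`
preserves the terminal object. -/
noncomputable def ihomTermIso (A : C) : (⊤_ C : C) ≅ (ihom A).obj (⊤_ C : C) where
  hom := curry (terminal.from _)
  inv := terminal.from _
  hom_inv_id := Subsingleton.elim _ _
  inv_hom_id := hom_to_ihom_terminal_ext _ _

/-- The morphism `t ⟶ [A, b]` adjoint to the composite `A ⊗ t ⟶ t ⟶ b` of the canonical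
morphism to the terminal object followed by the basepoint of `b`. -/
noncomputable def pointLeg (A : C) (b : Under (⊤_ C)) :
    (⊤_ C : C) ⟶ (ihom A).obj b.right :=
  curry (terminal.from (A ⊗ (⊤_ C : C)) ≫ b.hom)

/-- The composite `t ≅ [a, t] ⟶ [a, b]`, the first component of the basepoint of the based
hom object. -/
noncomputable def basedHomPointFst (a b : Under (⊤_ C)) :
    (⊤_ C : C) ⟶ (ihom a.right).obj b.right :=
  (ihomTermIso a.right).hom ≫ (ihom a.right).map b.hom

theorem basedHomPoint_w (a b : Under (⊤_ C)) :
    basedHomPointFst a b ≫ (pre a.hom).app b.right = 𝟙 (⊤_ C : C) ≫ pointLeg (⊤_ C : C) b := by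
  rw [Category.id_comp]
  dsimp [basedHomPointFst, pointLeg, ihomTermIso]
  rw [Category.assoc, ← pre_comm_ihom_map, curry_natural_right, ← Category.assoc]
  congr 1
  apply uncurry_injective
  exact Subsingleton.elim _ _

/-- The based hom object `hom_*(a, b)`: the pullback of `[a, b] ⟶ [t, b] ⟵ t`, pointed by
the induced morphism from `t`. -/
noncomputable def basedHom (a b : Under (⊤_ C)) : Under (⊤_ C) :=
  Under.mk (pullback.lift (basedHomPointFst a b) (𝟙 (⊤_ C : C)) (basedHomPoint_w a b))

theorem basedHomPointFst_map (a : Under (⊤_ C)) {x x' : Under (⊤_ C)} (g : x ⟶ x') :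
    basedHomPointFst a x ≫ (ihom a.right).map g.right = basedHomPointFst a x' := by
  dsimp [basedHomPointFst]
  rw [Category.assoc, ← Functor.map_comp, Under.w g]

theorem basedHomPointFst_pre {a a' : Under (⊤_ C)} (f : a ⟶ a') (x : Under (⊤_ C)) :
    basedHomPointFst a' x ≫ (pre f.right).app x.right = basedHomPointFst a x := by
  dsimp [basedHomPointFst]
  rw [Category.assoc, ← pre_comm_ihom_map, ← Category.assoc]
  congr 1
  exact hom_to_ihom_terminal_ext _ _

/-- Functoriality of the based hom object: contravariant in the first variable and
covariant in the second. -/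
noncomputable def basedHomMap {a a' x x' : Under (⊤_ C)} (f : a ⟶ a') (g : x ⟶ x') :
    basedHom a' x ⟶ basedHom a x' :=
  Under.homMk
    (pullback.map ((pre a'.hom).app x.right) (pointLeg (⊤_ C : C) x)
      ((pre a.hom).app x'.right) (pointLeg (⊤_ C : C) x')
      ((ihom a'.right).map g.right ≫ (pre f.right).app x'.right)
      (𝟙 (⊤_ C : C))
      ((ihom (⊤_ C : C)).map g.right)
      (by
        rw [Category.assoc, ← NatTrans.comp_app, ← MonoidalClosed.pre_map, Under.w f]
        exact pre_comm_ihom_map a'.hom g.right)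
      (by
        rw [Category.id_comp]
        dsimp [pointLeg]
        rw [← curry_natural_right, Category.assoc, Under.w g]))
    (by
      dsimp [basedHom]
      apply pullback.hom_ext
      · rw [Category.assoc, pullback.lift_fst, pullback.lift_fst_assoc, ← Category.assoc,
          basedHomPointFst_map, basedHomPointFst_pre, pullback.lift_fst]
      · rw [Category.assoc, pullback.lift_snd, pullback.lift_snd, Category.comp_id,
          pullback.lift_snd])

end BasedObjects

namespace CategoryTheory.MonoidalCategory

variable {C : Type u} [Category.{v} C] [MonoidalCategory C] [BraidedCategory C]

theorem coprod_whiskerRight_hom_ext [MonoidalClosed C] {X₁ X₂ Z W : C}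
    [HasBinaryCoproduct X₁ X₂] {f g : (X₁ ⨿ X₂) ⊗ Z ⟶ W}
    (h₁ : coprod.inl ▷ Z ≫ f = coprod.inl ▷ Z ≫ g)
    (h₂ : coprod.inr ▷ Z ≫ f = coprod.inr ▷ Z ≫ g) : f = g := by
  -- `- ⊗ Z` is isomorphic to `Z ⊗ -`, which is a left adjoint
  suffices curry ((β_ Z _).hom ≫ f) = curry ((β_ Z _).hom ≫ g) by
    rwa [curry_injective.eq_iff, cancel_epi] at this
  apply coprod.hom_ext <;>
    rw [← curry_natural_left, ← curry_natural_left,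
      BraidedCategory.braiding_naturality_right_assoc,
      BraidedCategory.braiding_naturality_right_assoc]
  exacts [by rw [h₁], by rw [h₂]]

def swapAssoc (A B X : C) : (A ⊗ B) ⊗ X ≅ B ⊗ (A ⊗ X) :=
  whiskerRightIso (β_ A B) X ≪≫ α_ B A X

theorem swapAssoc_hom_naturality_left {A A' B : C} (X : C) (f : A' ⟶ A) :
    (f ▷ B) ▷ X ≫ (swapAssoc A B X).hom = (swapAssoc A' B X).hom ≫ B ◁ f ▷ X := by
  simp only [swapAssoc, Iso.trans_hom, whiskerRightIso_hom, Category.assoc,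
    ← comp_whiskerRight_assoc, BraidedCategory.braiding_naturality_left, comp_whiskerRight,
    associator_naturality_middle]

theorem swapAssoc_hom_naturality_middle {A B B' : C} (X : C) (g : B' ⟶ B) :
    (A ◁ g) ▷ X ≫ (swapAssoc A B X).hom = (swapAssoc A B' X).hom ≫ g ▷ (A ⊗ X) := by
  simp only [swapAssoc, Iso.trans_hom, whiskerRightIso_hom, Category.assoc,
    ← comp_whiskerRight_assoc, BraidedCategory.braiding_naturality_right, comp_whiskerRight,
    associator_naturality_left]

theorem swapAssoc_hom_naturality_right {A B X X' : C} (h : X' ⟶ X) :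
    (A ⊗ B) ◁ h ≫ (swapAssoc A B X).hom = (swapAssoc A B X').hom ≫ B ◁ A ◁ h := by
  simp only [swapAssoc, Iso.trans_hom, whiskerRightIso_hom, whisker_exchange_assoc, Category.assoc,
    associator_naturality_right]

end CategoryTheory.MonoidalCategory

namespace BasedObjects

section

variable {C : Type u} [Category.{v} C] [MonoidalCategory C] [MonoidalClosed C] [HasLimits C]

theorem uncurry_comp_pointLeg {A Y : C} (y : Under (⊤_ C)) (g : Y ⟶ ⊤_ C) :
    uncurry (g ≫ pointLeg A y) = terminal.from (A ⊗ Y) ≫ y.hom := by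
  rw [pointLeg, uncurry_natural_left, uncurry_curry, ← Category.assoc, terminal.comp_from]

theorem comp_pre_eq_comp_pointLeg_iff {A B X : C} (y : Under (⊤_ C))
    (f : X ⟶ (ihom A).obj y.right) (g : X ⟶ ⊤_ C) (k : B ⟶ A) :
    f ≫ (pre k).app y.right = g ≫ pointLeg B y ↔
      k ▷ X ≫ uncurry f = terminal.from _ ≫ y.hom := by
  rw [← uncurry_injective.eq_iff, uncurry_pre_app, uncurry_comp_pointLeg]

theorem wedgeMap_whiskerRight_comp_eq_iff [BraidedCategory C] [HasColimits C] {X : C}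
    (a b c : Under (⊤_ C)) (φ : b.right ⊗ (a.right ⊗ X) ⟶ c.right) :
    wedgeMap a b ▷ X ≫ (swapAssoc a.right b.right X).hom ≫ φ = terminal.from _ ≫ c.hom ↔
      b.hom ▷ (a.right ⊗ X) ≫ φ = terminal.from _ ≫ c.hom ∧
        b.right ◁ a.hom ▷ X ≫ φ = terminal.from _ ≫ c.hom := by
  unfold wedgeMap wedgeObj
  have inl : coprod.inl ▷ X ≫ coprod.desc (a.right ◁ b.hom) (a.hom ▷ b.right) ▷ X ≫
      (swapAssoc _ _ X).hom = (swapAssoc _ _ X).hom ≫ b.hom ▷ (a.right ⊗ X) := by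
    rw [← comp_whiskerRight_assoc, coprod.inl_desc, swapAssoc_hom_naturality_middle]
  have inr : coprod.inr ▷ X ≫ coprod.desc (a.right ◁ b.hom) (a.hom ▷ b.right) ▷ X ≫
      (swapAssoc _ _ X).hom = (swapAssoc _ _ X).hom ≫ b.right ◁ a.hom ▷ X := by
    rw [← comp_whiskerRight_assoc, coprod.inr_desc, swapAssoc_hom_naturality_left]
  constructor
  · intro h
    constructor
    · rw [← cancel_epi (swapAssoc _ _ X).hom, ← reassoc_of% inl, h, terminal.comp_from_assoc,
        terminal.comp_from_assoc]
    · rw [← cancel_epi (swapAssoc _ _ X).hom, ← reassoc_of% inr, h, terminal.comp_from_assoc,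
        terminal.comp_from_assoc]
  · rintro ⟨h₁, h₂⟩
    apply coprod_whiskerRight_hom_ext
    · rw [reassoc_of% inl, h₁, terminal.comp_from_assoc, terminal.comp_from_assoc]
    · rw [reassoc_of% inr, h₂, terminal.comp_from_assoc, terminal.comp_from_assoc]

theorem comp_pre_wedgeMap_eq_iff [BraidedCategory C] [HasColimits C] {X : C}
    (a b c : Under (⊤_ C)) (f : X ⟶ (ihom (a.right ⊗ b.right)).obj c.right)
    (g : X ⟶ ⊤_ C) :
    f ≫ (pre (wedgeMap a b)).app c.right = g ≫ pointLeg (wedgeObj a b) c ↔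
      b.hom ▷ (a.right ⊗ X) ≫ (swapAssoc a.right b.right X).inv ≫ uncurry f =
          terminal.from _ ≫ c.hom ∧
        b.right ◁ a.hom ▷ X ≫ (swapAssoc a.right b.right X).inv ≫ uncurry f =
          terminal.from _ ≫ c.hom := by
  rw [comp_pre_eq_comp_pointLeg_iff, ← wedgeMap_whiskerRight_comp_eq_iff, Iso.hom_inv_id_assoc]

end

variable {C : Type u} [Category.{v} C] [MonoidalCategory C] [SymmetricCategory C]
  [MonoidalClosed C] [HasLimits C] [HasColimits C]

theorem basedHomPointFst_eq_pointLeg (a y : Under (⊤_ C)) :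
    basedHomPointFst a y = pointLeg a.right y :=
  uncurry_injective (by
    rw [basedHomPointFst, ihomTermIso, uncurry_natural_right, uncurry_curry, pointLeg,
      uncurry_curry])

noncomputable def basedHomFst (a y : Under (⊤_ C)) :
    (basedHom a y).right ⟶ (ihom a.right).obj y.right :=
  pullback.fst _ _

theorem basedHom_hom_ext {X : C} {a y : Under (⊤_ C)} {f g : X ⟶ (basedHom a y).right}
    (h : f ≫ basedHomFst a y = g ≫ basedHomFst a y) : f = g :=
  pullback.hom_ext h (terminal.hom_ext _ _)

theorem basedHom_hom_basedHomFst (a y : Under (⊤_ C)) :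
    (basedHom a y).hom ≫ basedHomFst a y = pointLeg a.right y := by
  rw [← basedHomPointFst_eq_pointLeg]
  exact pullback.lift_fst _ _ _

theorem basedHomFst_comp_pre (a y : Under (⊤_ C)) :
    basedHomFst a y ≫ (pre a.hom).app y.right = terminal.from _ ≫ pointLeg (⊤_ C) y :=
  pullback.condition.trans (by congr 1; exact terminal.hom_ext _ _)

theorem whiskerRight_comp_uncurry_basedHomFst {X : C} {a y : Under (⊤_ C)}
    (m : X ⟶ (basedHom a y).right) :
    a.hom ▷ X ≫ uncurry (m ≫ basedHomFst a y) = terminal.from _ ≫ y.hom :=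
  (comp_pre_eq_comp_pointLeg_iff y _ (terminal.from X) a.hom).1 (by
    rw [Category.assoc, basedHomFst_comp_pre, ← Category.assoc, terminal.comp_from])

noncomputable def basedHomLift {X : C} {a y : Under (⊤_ C)}
    (f : X ⟶ (ihom a.right).obj y.right)
    (hf : a.hom ▷ X ≫ uncurry f = terminal.from _ ≫ y.hom) : X ⟶ (basedHom a y).right :=
  pullback.lift f (terminal.from X) ((comp_pre_eq_comp_pointLeg_iff y f _ a.hom).2 hf)

theorem basedHomLift_basedHomFst {X : C} {a y : Under (⊤_ C)}
    (f : X ⟶ (ihom a.right).obj y.right)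
    (hf : a.hom ▷ X ≫ uncurry f = terminal.from _ ≫ y.hom) :
    basedHomLift f hf ≫ basedHomFst a y = f :=
  pullback.lift_fst _ _ _

noncomputable def doubleUncurry {X : C} {a b c : Under (⊤_ C)}
    (m : X ⟶ (basedHom a (basedHom b c)).right) : b.right ⊗ (a.right ⊗ X) ⟶ c.right :=
  uncurry (uncurry (m ≫ basedHomFst a _) ≫ basedHomFst b c)

theorem doubleUncurry_injective {X : C} {a b c : Under (⊤_ C)} :
    Function.Injective (doubleUncurry : (X ⟶ (basedHom a (basedHom b c)).right) → _) :=
  fun _ _ h => basedHom_hom_ext (uncurry_injective (basedHom_hom_ext (uncurry_injective h)))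

theorem doubleUncurry_comp {X' X : C} {a b c : Under (⊤_ C)} (h : X' ⟶ X)
    (m : X ⟶ (basedHom a (basedHom b c)).right) :
    doubleUncurry (h ≫ m) = b.right ◁ a.right ◁ h ≫ doubleUncurry m := by
  rw [doubleUncurry, doubleUncurry, Category.assoc, uncurry_natural_left h, Category.assoc,
    uncurry_natural_left (_ ◁ h)]

theorem whiskerRight_comp_doubleUncurry {X : C} {a b c : Under (⊤_ C)}
    (m : X ⟶ (basedHom a (basedHom b c)).right) :
    b.hom ▷ (a.right ⊗ X) ≫ doubleUncurry m = terminal.from _ ≫ c.hom :=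
  whiskerRight_comp_uncurry_basedHomFst _

theorem whiskerLeft_whiskerRight_comp_doubleUncurry {X : C} {a b c : Under (⊤_ C)}
    (m : X ⟶ (basedHom a (basedHom b c)).right) :
    b.right ◁ a.hom ▷ X ≫ doubleUncurry m = terminal.from _ ≫ c.hom := by
  rw [doubleUncurry, ← uncurry_natural_left, ← Category.assoc,
    whiskerRight_comp_uncurry_basedHomFst, Category.assoc, basedHom_hom_basedHomFst,
    uncurry_comp_pointLeg]

noncomputable def doubleCurry {X : C} {a b c : Under (⊤_ C)}
    (φ : b.right ⊗ (a.right ⊗ X) ⟶ c.right)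
    (hb : b.hom ▷ (a.right ⊗ X) ≫ φ = terminal.from _ ≫ c.hom)
    (ha : b.right ◁ a.hom ▷ X ≫ φ = terminal.from _ ≫ c.hom) :
    X ⟶ (basedHom a (basedHom b c)).right :=
  basedHomLift (curry (basedHomLift (curry φ) (by rwa [uncurry_curry]))) (by
    rw [uncurry_curry]
    apply basedHom_hom_ext
    rw [Category.assoc, basedHomLift_basedHomFst, Category.assoc, basedHom_hom_basedHomFst,
      ← curry_natural_left, ha, curry_eq_iff, uncurry_comp_pointLeg])

theorem doubleUncurry_doubleCurry {X : C} {a b c : Under (⊤_ C)}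
    (φ : b.right ⊗ (a.right ⊗ X) ⟶ c.right)
    (hb : b.hom ▷ (a.right ⊗ X) ≫ φ = terminal.from _ ≫ c.hom)
    (ha : b.right ◁ a.hom ▷ X ≫ φ = terminal.from _ ≫ c.hom) :
    doubleUncurry (doubleCurry φ hb ha) = φ := by
  rw [doubleUncurry, doubleCurry, basedHomLift_basedHomFst, uncurry_curry,
    basedHomLift_basedHomFst, uncurry_curry]

noncomputable def toIhomTensor (a b c : Under (⊤_ C)) :
    (basedHom a (basedHom b c)).right ⟶ (ihom (a.right ⊗ b.right)).obj c.right :=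
  curry ((swapAssoc a.right b.right _).hom ≫ doubleUncurry (𝟙 _))

theorem uncurry_comp_toIhomTensor {X : C} {a b c : Under (⊤_ C)}
    (m : X ⟶ (basedHom a (basedHom b c)).right) :
    uncurry (m ≫ toIhomTensor a b c) = (swapAssoc a.right b.right X).hom ≫ doubleUncurry m := by
  rw [uncurry_natural_left, toIhomTensor, uncurry_curry, ← Category.assoc,
    swapAssoc_hom_naturality_right, Category.assoc, ← doubleUncurry_comp, Category.comp_id]

theorem toIhomTensor_comp_pre_wedgeMap (a b c : Under (⊤_ C)) :
    toIhomTensor a b c ≫ (pre (wedgeMap a b)).app c.right =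
      terminal.from _ ≫ pointLeg (wedgeObj a b) c := by
  rw [comp_pre_wedgeMap_eq_iff, ← Category.id_comp (toIhomTensor a b c),
    uncurry_comp_toIhomTensor, Iso.inv_hom_id_assoc]
  exact ⟨whiskerRight_comp_doubleUncurry _, whiskerLeft_whiskerRight_comp_doubleUncurry _⟩

/-- For pointed objects `a`, `b`, `c`, the iterated based hom object
`hom_*(a, hom_*(b, c))` is a pullback of the cospan
`[a ⊗ b, c] ⟶ [(a ⊗ t) ⨿ (t ⊗ b), c] ⟵ t`, where the first leg is induced by the canonical
morphism `(a ⊗ t) ⨿ (t ⊗ b) ⟶ a ⊗ b` and the second leg is adjoint to the morphism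
`((a ⊗ t) ⨿ (t ⊗ b)) ⊗ t ⟶ c` factoring through `t` followed by the basepoint of `c`. -/
theorem basedHom_basedHom_isPullback (a b c : Under (⊤_ C)) :
    ∃ (p₁ : (basedHom a (basedHom b c)).right ⟶ (ihom (a.right ⊗ b.right)).obj c.right)
      (p₂ : (basedHom a (basedHom b c)).right ⟶ (⊤_ C : C))
      (w : p₁ ≫ (pre (wedgeMap a b)).app c.right = p₂ ≫ pointLeg (wedgeObj a b) c),
      Nonempty (IsLimit (PullbackCone.mk p₁ p₂ w)) := by
  refine ⟨toIhomTensor a b c, terminal.from _, toIhomTensor_comp_pre_wedgeMap a b c, ⟨?_⟩⟩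
  have cond (s : PullbackCone _ _) := (comp_pre_wedgeMap_eq_iff a b c s.fst s.snd).1 s.condition
  refine PullbackCone.IsLimit.mk _ (fun s => doubleCurry _ (cond s).1 (cond s).2)
    (fun s => uncurry_injective ?_) (fun s => terminal.hom_ext _ _)
    (fun s m hm _ => doubleUncurry_injective ?_)
  · rw [uncurry_comp_toIhomTensor, doubleUncurry_doubleCurry, Iso.hom_inv_id_assoc]
  · rw [doubleUncurry_doubleCurry, ← hm, uncurry_comp_toIhomTensor, Iso.inv_hom_id_assoc]

end BasedObjects
end
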